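/- arXiv:1805.11056 — 3 statements merged into one kernel-verified Lean document; each statement's English description precedes it below -/
import Mathlib

section
/- Let {a_n}_{n≥0} and {b_n}_{n≥1} be sequences of nonnegative reals satisfying a_{n+1} ≤ χ_0 a_n + χ_1 a_{n−1} + b_n for all n ≥ 1, where χ_0 ∈ R, χ_1 ≥ 0, χ_0 + χ_1 < 1, and Σ_{n≥1} b_n < +∞. Then Σ_{n≥0} a_n < +∞. -/
/-! Summing the recursion bounds the partial sums: `S (N + 2) ≤ χ₀ S (N + 1) + χ₁ S N + C`, and
since `S` is monotone and nonnegative the right side is at most `max (χ₀ + χ₁) 0 * S (N + 2) + C`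
(whatever the sign of `χ₀`). As that factor is `< 1`, the partial sums are bounded. -/

open Finset

lemma mul_add_mul_le_max_mul {χ₀ χ₁ x y z : ℝ} (hχ₁ : 0 ≤ χ₁) (hx : 0 ≤ x) (hxy : x ≤ y)
    (hyz : y ≤ z) : χ₀ * y + χ₁ * x ≤ max (χ₀ + χ₁) 0 * z := by
  rcases le_or_gt 0 χ₀ with hχ₀ | hχ₀
  · calc χ₀ * y + χ₁ * x ≤ (χ₀ + χ₁) * z := by nlinarith
      _ ≤ max (χ₀ + χ₁) 0 * z := mul_le_mul_of_nonneg_right (le_max_left _ _) (by linarith)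
  · calc χ₀ * y + χ₁ * x ≤ (χ₀ + χ₁) * x := by nlinarith
      _ ≤ max (χ₀ + χ₁) 0 * x := mul_le_mul_of_nonneg_right (le_max_left _ _) hx
      _ ≤ max (χ₀ + χ₁) 0 * z := mul_le_mul_of_nonneg_left (hxy.trans hyz) (le_max_right _ _)

lemma sum_range_add_two_le_of_two_step_le {a c : ℕ → ℝ} {χ₀ χ₁ : ℝ} (hc : ∀ n, 0 ≤ c n)
    (hcs : Summable c) (hrec : ∀ n, a (n + 2) ≤ χ₀ * a (n + 1) + χ₁ * a n + c n) (N : ℕ) :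
    ∑ i ∈ range (N + 2), a i ≤
      a 0 + a 1 + χ₀ * (∑ i ∈ range (N + 1), a i - a 0) + χ₁ * ∑ i ∈ range N, a i + ∑' n, c n := by
  have hsum := sum_le_sum fun n (_ : n ∈ range N) ↦ hrec n
  simp only [sum_add_distrib, ← mul_sum] at hsum
  have hc_le : ∑ n ∈ range N, c n ≤ ∑' n, c n := hcs.sum_le_tsum _ fun n _ ↦ hc n
  rw [sum_range_succ' _ (N + 1), sum_range_succ' _ N, sum_range_succ' _ N]
  linarith

theorem summable_of_two_step_le {a c : ℕ → ℝ} {χ₀ χ₁ : ℝ} (hχ₁ : 0 ≤ χ₁) (hχ : χ₀ + χ₁ < 1)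
    (ha : ∀ n, 0 ≤ a n) (hc : ∀ n, 0 ≤ c n) (hcs : Summable c)
    (hrec : ∀ n, a (n + 2) ≤ χ₀ * a (n + 1) + χ₁ * a n + c n) : Summable a := by
  set S : ℕ → ℝ := fun N ↦ ∑ i ∈ range N, a i
  set ρ := max (χ₀ + χ₁) 0
  set C := a 0 + a 1 + |χ₀| * a 0 + ∑' n, c n
  have hS_mono : Monotone S := fun m n hmn ↦
    sum_le_sum_of_subset_of_nonneg (range_subset_range.mpr hmn) fun i _ _ ↦ ha i
  have hρ : ρ < 1 := max_lt hχ one_pos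
  have hS_le : ∀ N, S (N + 2) ≤ C / (1 - ρ) := by
    intro N
    have hstep := sum_range_add_two_le_of_two_step_le hc hcs hrec N
    have hmix : χ₀ * S (N + 1) + χ₁ * S N ≤ ρ * S (N + 2) :=
      mul_add_mul_le_max_mul hχ₁ (sum_nonneg fun i _ ↦ ha i) (hS_mono N.le_succ)
        (hS_mono (N + 1).le_succ)
    have habs : -χ₀ * a 0 ≤ |χ₀| * a 0 := mul_le_mul_of_nonneg_right (neg_le_abs χ₀) (ha 0)
    rw [le_div_iff₀ (by linarith)]
    linarith
  exact summable_of_sum_range_le ha fun N ↦ (hS_mono (N.le_add_right 2)).trans (hS_le N)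

theorem stmt_5 (a b : ℕ → ℝ) (χ₀ χ₁ : ℝ) (hχ₁ : 0 ≤ χ₁) (hχ : χ₀ + χ₁ < 1)
    (ha : ∀ n, 0 ≤ a n) (hb : ∀ n, 1 ≤ n → 0 ≤ b n)
    (hrec : ∀ n, 1 ≤ n → a (n + 1) ≤ χ₀ * a n + χ₁ * a (n - 1) + b n)
    (hsum : Summable b) :
    Summable a :=
  summable_of_two_step_le hχ₁ hχ ha (fun n ↦ hb (n + 1) n.succ_pos)
    ((summable_nat_add_iff 1).mpr hsum) fun n ↦ hrec (n + 1) n.succ_pos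
end

section
/- Let {e_n}_{n≥0} be a monotonically decreasing sequence of nonnegative reals converging to 0 such that e_{n−1} − e_n ≥ C_e e_n^{2θ} for all n ≥ n_0, where C_e > 0 and θ ∈ (0, 1/2]. Then there exist C > 0 and Q ∈ [0,1) such that e_n ≤ C Q^n for all n ≥ n_0. -/
/-!
Once `e n ≤ 1`, the exponent `2θ ≤ 1` gives `e n ≤ e n ^ (2θ)`, so the recursion yields
`(1 + Ce) e n ≤ e (n - 1)`: the tail contracts by the factor `Q = (1 + Ce)⁻¹`. Since `e → 0`, this
happens from some `N ≥ n₀` on, and the finitely many terms between `n₀` and `N` are absorbed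
into the constant.
-/

open Filter

lemma le_inv_one_add_mul_of_mul_rpow_le_sub {x y c p : ℝ} (hx₀ : 0 ≤ x) (hx₁ : x ≤ 1)
    (hp : p ≤ 1) (hc : 0 ≤ c) (h : y - x ≥ c * x ^ p) : x ≤ (1 + c)⁻¹ * y := by
  have hxp : c * x ≤ c * x ^ p :=
    mul_le_mul_of_nonneg_left (Real.self_le_rpow_of_le_one hx₀ hx₁ hp) hc
  rw [le_inv_mul_iff₀ (by linarith)]
  linarith

lemma exists_le_mul_pow_of_antitone_of_eventually_contracting {e : ℕ → ℝ} (he : Antitone e)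
    {q : ℝ} (hq₀ : 0 < q) (hq₁ : q ≤ 1) {n₀ N : ℕ} (hN : n₀ ≤ N)
    (hstep : ∀ n, N ≤ n → e (n + 1) ≤ q * e n) :
    ∃ C, 0 < C ∧ ∀ n, n₀ ≤ n → e n ≤ C * q ^ n := by
  have htail : ∀ n, n₀ ≤ n → e n ≤ q ^ (n - N) * e n₀ := by
    intro n hn
    rcases le_total n N with hnN | hNn
    · simpa [Nat.sub_eq_zero_of_le hnN] using he hn
    · have hgeom := le_geom (u := fun k => e (N + k)) hq₀.le (n - N)
        (fun k _ => by simpa [add_assoc] using hstep (N + k) (Nat.le_add_right N k))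
      rw [Nat.add_sub_cancel' hNn] at hgeom
      exact hgeom.trans (mul_le_mul_of_nonneg_left (he hN) (pow_nonneg hq₀.le _))
  refine ⟨max (e n₀) 1 / q ^ N, by positivity, fun n hn => ?_⟩
  have hpow : q ^ (n - N) * q ^ N ≤ q ^ n := by
    rw [← pow_add]
    exact pow_le_pow_of_le_one hq₀.le hq₁ (by omega)
  calc e n ≤ q ^ (n - N) * max (e n₀) 1 :=
        (htail n hn).trans (mul_le_mul_of_nonneg_left (le_max_left _ _) (pow_nonneg hq₀.le _))
    _ ≤ q ^ n / q ^ N * max (e n₀) 1 := by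
        gcongr
        rwa [le_div_iff₀ (pow_pos hq₀ N)]
    _ = max (e n₀) 1 / q ^ N * q ^ n := by ring

theorem stmt_13_general (e : ℕ → ℝ) (he0 : ∀ n, 0 ≤ e n)
    (hmono : ∀ n, e (n + 1) ≤ e n)
    (hlim : Filter.Tendsto e Filter.atTop (nhds 0))
    (n₀ : ℕ) (Ce θ : ℝ) (hCe : 0 < Ce)
    (hθ : θ ∈ Set.Ioc (0 : ℝ) (1 / 2))
    (hrec : ∀ n, n₀ ≤ n → e (n - 1) - e n ≥ Ce * e n ^ (2 * θ)) :
    ∃ C : ℝ, 0 < C ∧ ∃ Q ∈ Set.Ico (0 : ℝ) 1, ∀ n, n₀ ≤ n → e n ≤ C * Q ^ n := by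
  have hanti : Antitone e := antitone_nat_of_succ_le hmono
  obtain ⟨N, hN₀, hN₁⟩ : ∃ N, n₀ ≤ N ∧ e N ≤ 1 :=
    ((eventually_ge_atTop n₀).and (hlim.eventually (ge_mem_nhds one_pos))).exists
  have hQ₀ : 0 < (1 + Ce)⁻¹ := by positivity
  have hQ₁ : (1 + Ce)⁻¹ < 1 := inv_lt_one_of_one_lt₀ (by linarith)
  have hstep : ∀ n, N ≤ n → e (n + 1) ≤ (1 + Ce)⁻¹ * e n := fun n hn => by
    have h := hrec (n + 1) (by omega)
    rw [Nat.add_sub_cancel] at h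
    exact le_inv_one_add_mul_of_mul_rpow_le_sub (he0 _) ((hanti (by omega)).trans hN₁)
      (by linarith [hθ.2]) hCe.le h
  obtain ⟨C, hC, hbound⟩ :=
    exists_le_mul_pow_of_antitone_of_eventually_contracting hanti hQ₀ hQ₁.le hN₀ hstep
  exact ⟨C, hC, _, ⟨hQ₀.le, hQ₁⟩, hbound⟩

theorem stmt_13 (e : ℕ → ℝ) (he0 : ∀ n, 0 ≤ e n)
    (hmono : ∀ n, e (n + 1) ≤ e n)
    (hlim : Filter.Tendsto e Filter.atTop (nhds 0))
    (n₀ : ℕ) (hn₀ : 1 ≤ n₀) (Ce θ : ℝ) (hCe : 0 < Ce)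
    (hθ : θ ∈ Set.Ioc (0 : ℝ) (1 / 2))
    (hrec : ∀ n, n₀ ≤ n → e (n - 1) - e n ≥ Ce * e n ^ (2 * θ)) :
    ∃ C : ℝ, 0 < C ∧ ∃ Q ∈ Set.Ico (0 : ℝ) 1, ∀ n, n₀ ≤ n → e n ≤ C * Q ^ n :=
  stmt_13_general e he0 hmono hlim n₀ Ce θ hCe hθ hrec
end

section
/- Let {e_n}_{n≥0} be a monotonically decreasing sequence of nonnegative reals converging to 0 such that e_{n−1} − e_n ≥ C_e e_n^{2θ} for all n ≥ n_0, where C_e > 0 and θ ∈ (1/2, 1). Then there exists C > 0 such that e_n ≤ C n^{−1/(2θ−1)} for all n ≥ n_0 + 1. -/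
/-!
Put `β = 1 / (2θ - 1)`, so that `(K n ^ (-β)) ^ (2θ) = K ^ (2θ) n ^ (-β - 1)`. By convexity of
`x ^ (-β)`, `K n ^ (-β) - K (n + 1) ^ (-β) ≤ β K n ^ (-β - 1) ≤ β 2 ^ (β + 1) K (n + 1) ^ (-β - 1)`,
so for `K` large the barrier `g n = K n ^ (-β)` decreases no faster than the recursion forces `e`
to decrease: `g n - g (n + 1) ≤ Ce g (n + 1) ^ (2θ)`. Since `x ↦ x + Ce x ^ (2θ)` is increasing
on `[0, ∞)`, the inequality `e n ≤ g n` propagates by induction from `n₀`, where it holds once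
`K ≥ e n₀ n₀ ^ β`.
-/

open Real

lemma one_add_mul_sub_one_le_rpow_of_nonpos {t r : ℝ} (ht : 0 < t) (hr : r ≤ 0) :
    1 + r * (t - 1) ≤ t ^ r := by
  have hlog : r * (t - 1) ≤ r * log t :=
    mul_le_mul_of_nonpos_left (log_le_sub_one_of_pos ht) hr
  calc 1 + r * (t - 1) ≤ r * log t + 1 := by linarith
    _ ≤ exp (r * log t) := add_one_le_exp _
    _ = t ^ r := by rw [rpow_def_of_pos ht, mul_comm]

lemma rpow_neg_sub_rpow_neg_le {a b β : ℝ} (ha : 0 < a) (hb : 0 < b) (hβ : 0 ≤ β) :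
    a ^ (-β) - b ^ (-β) ≤ β * a ^ (-β - 1) * (b - a) := by
  have hbern := one_add_mul_sub_one_le_rpow_of_nonpos (div_pos hb ha) (neg_nonpos.2 hβ)
  have hsplit : b ^ (-β) = a ^ (-β) * (b / a) ^ (-β) := by
    rw [← mul_rpow ha.le (div_pos hb ha).le, mul_div_cancel₀ _ ha.ne']
  calc a ^ (-β) - b ^ (-β) ≤ a ^ (-β) - a ^ (-β) * (1 + -β * (b / a - 1)) := by
        rw [hsplit]; gcongr
    _ = β * (a ^ (-β) / a) * (b - a) := by field_simp; ring
    _ = β * a ^ (-β - 1) * (b - a) := by rw [rpow_sub_one ha.ne']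

lemma rpow_neg_le_two_rpow_mul_succ_rpow_neg {n s : ℝ} (hn : 1 ≤ n) (hs : 0 ≤ s) :
    n ^ (-s) ≤ 2 ^ s * (n + 1) ^ (-s) := by
  have hn0 : 0 < n := by linarith
  calc n ^ (-s) = 2 ^ s * (2 * n) ^ (-s) := by
        rw [mul_rpow zero_le_two hn0.le, ← mul_assoc, rpow_neg zero_le_two,
          mul_inv_cancel₀ (rpow_pos_of_pos two_pos s).ne', one_mul]
    _ ≤ 2 ^ s * (n + 1) ^ (-s) := by
        gcongr _ * ?_
        exact rpow_le_rpow_of_nonpos (by linarith) (by linarith) (neg_nonpos.2 hs)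

lemma le_of_sub_succ_le_mul_rpow {e g : ℕ → ℝ} {c p : ℝ} {n₀ : ℕ} (hc : 0 ≤ c) (hp : 0 ≤ p)
    (hg : ∀ n, 0 ≤ g n)
    (he : ∀ n, n₀ ≤ n → c * e (n + 1) ^ p ≤ e n - e (n + 1))
    (hge : ∀ n, n₀ ≤ n → g n - g (n + 1) ≤ c * g (n + 1) ^ p)
    (h₀ : e n₀ ≤ g n₀) {n : ℕ} (hn : n₀ ≤ n) : e n ≤ g n := by
  induction n, hn using Nat.le_induction with
  | base => exact h₀
  | succ n hn ih =>
    by_contra! hlt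
    have hpow : c * g (n + 1) ^ p ≤ c * e (n + 1) ^ p := by gcongr; exact hg _
    linarith [he n hn, hge n hn]

lemma rpow_neg_sub_succ_le_mul_rpow {K c p β : ℝ} (hK : 0 < K) (hβ : 0 ≤ β)
    (hβp : β * (p - 1) = 1) (hKc : β * 2 ^ (β + 1) ≤ c * K ^ (p - 1)) {n : ℕ} (hn : 1 ≤ n) :
    K * (n : ℝ) ^ (-β) - K * ((n + 1 : ℕ) : ℝ) ^ (-β) ≤ c * (K * ((n + 1 : ℕ) : ℝ) ^ (-β)) ^ p := by
  have hn' : (1 : ℝ) ≤ n := by exact_mod_cast hn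
  have hn0 : (0 : ℝ) < n := by linarith
  have hm0 : (0 : ℝ) < n + 1 := by linarith
  push_cast
  have hexp : -β * p = -(β + 1) := by linarith
  calc K * (n : ℝ) ^ (-β) - K * ((n : ℝ) + 1) ^ (-β)
      = K * ((n : ℝ) ^ (-β) - ((n : ℝ) + 1) ^ (-β)) := by ring
    _ ≤ K * (β * (n : ℝ) ^ (-(β + 1))) := by
        gcongr
        simpa only [neg_add', add_sub_cancel_left, mul_one] using
          rpow_neg_sub_rpow_neg_le hn0 hm0 hβ
    _ ≤ K * (β * (2 ^ (β + 1) * ((n : ℝ) + 1) ^ (-(β + 1)))) := by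
        gcongr
        exact rpow_neg_le_two_rpow_mul_succ_rpow_neg hn' (by linarith)
    _ = (β * 2 ^ (β + 1)) * (K * ((n : ℝ) + 1) ^ (-(β + 1))) := by ring
    _ ≤ (c * K ^ (p - 1)) * (K * ((n : ℝ) + 1) ^ (-(β + 1))) := by gcongr
    _ = c * (K * ((n : ℝ) + 1) ^ (-β)) ^ p := by
        have hKp : K ^ p = K ^ (p - 1) * K := by rw [← rpow_add_one hK.ne', sub_add_cancel]
        rw [mul_rpow hK.le (rpow_pos_of_pos hm0 _).le, ← rpow_mul hm0.le, hexp, hKp]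
        ring

lemma le_rpow_of_rpow_le {A K β r : ℝ} (hA : 0 ≤ A) (hr : 0 ≤ r) (hβr : β * r = 1)
    (h : A ^ β ≤ K) : A ≤ K ^ r := by
  calc A = (A ^ β) ^ r := by rw [← rpow_mul hA, hβr, rpow_one]
    _ ≤ K ^ r := rpow_le_rpow (rpow_nonneg hA β) h hr

theorem stmt_14_general (e : ℕ → ℝ)
    (n₀ : ℕ) (hn₀ : 1 ≤ n₀) (Ce θ : ℝ) (hCe : 0 < Ce)
    (hθ : θ ∈ Set.Ioo (1 / 2 : ℝ) 1)
    (hrec : ∀ n, n₀ ≤ n → e (n - 1) - e n ≥ Ce * e n ^ (2 * θ)) :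
    ∃ C : ℝ, 0 < C ∧ ∀ n, n₀ + 1 ≤ n → e n ≤ C * (n : ℝ) ^ (-(1 / (2 * θ - 1))) := by
  set β := 1 / (2 * θ - 1)
  have hθ' : 0 < 2 * θ - 1 := by linarith [hθ.1]
  have hβ : 0 < β := by positivity
  have hβp : β * (2 * θ - 1) = 1 := one_div_mul_cancel hθ'.ne'
  set A := β * 2 ^ (β + 1) / Ce
  set K := max (e n₀ * (n₀ : ℝ) ^ β) (A ^ β)
  have hn₀' : (0 : ℝ) < n₀ := by exact_mod_cast hn₀
  have hK : 0 < K := (rpow_pos_of_pos (by positivity) β).trans_le (le_max_right _ _)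
  have hKc : β * 2 ^ (β + 1) ≤ Ce * K ^ (2 * θ - 1) := by
    rw [← div_le_iff₀' hCe]
    exact le_rpow_of_rpow_le (by positivity) hθ'.le hβp (le_max_right _ _)
  have h₀ : e n₀ ≤ K * (n₀ : ℝ) ^ (-β) := by
    rw [rpow_neg hn₀'.le, ← div_eq_mul_inv, le_div_iff₀ (rpow_pos_of_pos hn₀' β)]
    exact le_max_left _ _
  have hg : ∀ n : ℕ, 0 ≤ K * (n : ℝ) ^ (-β) := fun n =>
    mul_nonneg hK.le (rpow_nonneg n.cast_nonneg _)
  have he : ∀ n, n₀ ≤ n → Ce * e (n + 1) ^ (2 * θ) ≤ e n - e (n + 1) := fun n hn => by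
    simpa using hrec (n + 1) (by omega)
  have hge : ∀ n, n₀ ≤ n → K * (n : ℝ) ^ (-β) - K * ((n + 1 : ℕ) : ℝ) ^ (-β) ≤
      Ce * (K * ((n + 1 : ℕ) : ℝ) ^ (-β)) ^ (2 * θ) := fun n hn =>
    rpow_neg_sub_succ_le_mul_rpow hK hβ.le hβp hKc (hn₀.trans hn)
  exact ⟨K, hK, fun n hn =>
    le_of_sub_succ_le_mul_rpow hCe.le (by linarith [hθ.1]) hg he hge h₀ (by omega)⟩

theorem stmt_14 (e : ℕ → ℝ) (he0 : ∀ n, 0 ≤ e n)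
    (hmono : ∀ n, e (n + 1) ≤ e n)
    (hlim : Filter.Tendsto e Filter.atTop (nhds 0))
    (n₀ : ℕ) (hn₀ : 1 ≤ n₀) (Ce θ : ℝ) (hCe : 0 < Ce)
    (hθ : θ ∈ Set.Ioo (1 / 2 : ℝ) 1)
    (hrec : ∀ n, n₀ ≤ n → e (n - 1) - e n ≥ Ce * e n ^ (2 * θ)) :
    ∃ C : ℝ, 0 < C ∧ ∀ n, n₀ + 1 ≤ n → e n ≤ C * (n : ℝ) ^ (-(1 / (2 * θ - 1))) :=
  stmt_14_general e n₀ hn₀ Ce θ hCe hθ hrec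
end
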